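/- arXiv:1910.06524 — 4 statements merged into one kernel-verified Lean document; each statement's English description precedes it below -/
import Mathlib

section
/- Let x(t;θ) solve dx/dt = f(x) with x(0) = θ, and let C : ℝ^d → ℝ be continuously differentiable. If λ(t) solves the adjoint system dλ/dt = -(∇_x f(x(t;θ)))^T λ backwards from the final condition λ(T) = ∇_x C(x(T;θ)), then λ(0) = ∇_θ C(x(T;θ)), the gradient of the composed map θ ↦ C(x(T;θ)). -/
open Matrix

/-!
The directional derivative `u t = D_θ X(t, θ) v` solves the variational equation
`u' = Df(X(t, θ)) u`, so the pairing `λ t ⬝ᵥ u t` has derivative `-(Jᵀ λ) ⬝ᵥ u + λ ⬝ᵥ J u = 0`.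
At `T` the pairing is `∇C ⬝ᵥ u T`, the chain-rule derivative of `C ∘ X T` in direction `v`,
and at `0` it is `λ 0 ⬝ᵥ v`.

The variational equation comes from passing to the limit, by dominated convergence, in the
integral form of the ODE for the difference quotients `n • (X t (θ + n⁻¹ • v) - X t θ)`.
The domination is Gronwall's inequality, valid because a continuity argument keeps nearby
trajectories in a compact neighbourhood of the trajectory of `θ`, on which `f` is Lipschitz.
-/

open Set Metric Filter Topology Real MeasureTheory
open scoped NNReal

section Trajectories

variable {E : Type*} [NormedAddCommGroup E] [NormedSpace ℝ E] {g : E → E}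

theorem dist_trajectories_le_of_lipschitzOnWith {F G : ℝ → E} {L : ℝ≥0} {T : ℝ}
    (hF : ∀ t, HasDerivAt F (g (F t)) t) (hG : ∀ t, HasDerivAt G (g (G t)) t)
    (hg : LipschitzOnWith L g (cthickening 1 (F '' Icc 0 T)))
    (h0 : dist (G 0) (F 0) * exp (L * T) < 1) :
    ∀ t ∈ Icc 0 T, dist (G t) (F t) ≤ dist (G 0) (F 0) * exp (L * t) := by
  have hFc : Continuous F := continuous_iff_continuousAt.2 fun t => (hF t).continuousAt
  have hGc : Continuous G := continuous_iff_continuousAt.2 fun t => (hG t).continuousAt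
  have gronwall : ∀ b ≤ T, (∀ t ∈ Ico 0 b, dist (G t) (F t) < 1) →
      ∀ t ∈ Icc 0 b, dist (G t) (F t) ≤ dist (G 0) (F 0) * exp (L * t) := by
    intro b hbT hnear t ht
    have hFmem : ∀ t ∈ Ico 0 b, F t ∈ F '' Icc 0 T := fun t ht =>
      mem_image_of_mem F ⟨ht.1, ht.2.le.trans hbT⟩
    simpa using dist_le_of_trajectories_ODE_of_mem (v := fun _ => g) (K := L)
      (fun _ _ => hg) hGc.continuousOn (fun t _ => (hG t).hasDerivWithinAt)
      (fun t ht => mem_cthickening_of_dist_le _ _ _ _ (hFmem t ht) (hnear t ht).le)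
      hFc.continuousOn (fun t _ => (hF t).hasDerivWithinAt)
      (fun t ht => self_subset_cthickening _ (hFmem t ht)) le_rfl t ht
  have hexp : ∀ t ≤ T, dist (G 0) (F 0) * exp (L * t) < 1 := fun t ht =>
    lt_of_le_of_lt (by gcongr) h0
  suffices hnear : ∀ t ∈ Icc 0 T, dist (G t) (F t) < 1 from
    gronwall T le_rfl fun t ht => hnear t (Ico_subset_Icc_self ht)
  -- at the first time `τ` the distance reaches `1`, Gronwall's bound on `[0, τ]` is violated
  by_contra! ⟨t, ht, hfar⟩
  set B := Icc 0 T ∩ {t | 1 ≤ dist (G t) (F t)}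
  have hB : IsClosed B := isClosed_Icc.inter (isClosed_le continuous_const (hGc.dist hFc))
  have hBbdd : BddBelow B := ⟨0, fun s hs => hs.1.1⟩
  set τ := sInf B
  obtain ⟨⟨hτ0, hτT⟩, hτfar : 1 ≤ dist (G τ) (F τ)⟩ := hB.csInf_mem ⟨t, ht, hfar⟩ hBbdd
  have hbefore : ∀ s ∈ Ico 0 τ, dist (G s) (F s) < 1 := fun s hs => by
    by_contra! h
    exact (csInf_le hBbdd ⟨⟨hs.1, hs.2.le.trans hτT⟩, h⟩).not_gt hs.2
  linarith [gronwall τ hτT hbefore τ ⟨hτ0, le_rfl⟩, hexp τ hτT]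

theorem exists_dist_comp_trajectories_le [ProperSpace E] (hg : LocallyLipschitz g) {F : ℝ → E}
    (hF : ∀ t, HasDerivAt F (g (F t)) t) (T : ℝ) :
    ∃ δ > 0, ∃ K, ∀ G : ℝ → E, (∀ t, HasDerivAt G (g (G t)) t) → dist (G 0) (F 0) < δ →
      ∀ t ∈ Icc 0 T, dist (g (G t)) (g (F t)) ≤ K * dist (G 0) (F 0) := by
  have hFc : Continuous F := continuous_iff_continuousAt.2 fun t => (hF t).continuousAt
  set N := cthickening 1 (F '' Icc 0 T)
  obtain ⟨L, hL⟩ := hg.locallyLipschitzOn.exists_lipschitzOnWith_of_compact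
    ((isCompact_Icc.image hFc).cthickening (r := 1))
  refine ⟨exp (-(L * T)), exp_pos _, L * exp (L * T), fun G hG hG0 t ht => ?_⟩
  have h0 : dist (G 0) (F 0) * exp (L * T) < 1 := by
    calc _ < exp (-(L * T)) * exp (L * T) := by gcongr
      _ = 1 := by rw [← exp_add, neg_add_cancel, exp_zero]
  have hdist := dist_trajectories_le_of_lipschitzOnWith hF hG hL h0 t ht
  have hexp : exp (L * t) ≤ exp (L * T) := by gcongr; exact ht.2
  have hGN : G t ∈ N := mem_cthickening_of_dist_le _ (F t) _ _ (mem_image_of_mem F ht) <| by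
    nlinarith [dist_nonneg (x := G 0) (y := F 0)]
  calc dist (g (G t)) (g (F t)) ≤ L * dist (G t) (F t) :=
        hL.dist_le_mul _ hGN _ (self_subset_cthickening _ (mem_image_of_mem F ht))
    _ ≤ L * (dist (G 0) (F 0) * exp (L * T)) := by
        gcongr; exact hdist.trans (by gcongr)
    _ = L * exp (L * T) * dist (G 0) (F 0) := by ring

variable [ProperSpace E] {X : ℝ → E → E}

theorem exists_eventually_norm_smul_comp_flow_sub_le (hg : LocallyLipschitz g)
    (hX0 : ∀ q, X 0 q = q) (hX : ∀ q t, HasDerivAt (fun s => X s q) (g (X t q)) t)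
    (p v : E) (T : ℝ) :
    ∃ K, ∀ᶠ n : ℕ in atTop, ∀ s ∈ Icc 0 T,
      ‖(n : ℝ) • (g (X s (p + (n : ℝ)⁻¹ • v)) - g (X s p))‖ ≤ K := by
  obtain ⟨δ, hδ, K, hK⟩ := exists_dist_comp_trajectories_le hg (hX p) T
  have hsmall : ∀ᶠ n : ℕ in atTop, (n : ℝ)⁻¹ * ‖v‖ < δ := by
    have := (tendsto_inv_atTop_zero.comp tendsto_natCast_atTop_atTop).mul_const ‖v‖
    exact this.eventually_lt_const (by simpa using hδ)
  refine ⟨K * ‖v‖, (hsmall.and (eventually_gt_atTop 0)).mono fun n ⟨hn, hn0⟩ s hs => ?_⟩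
  have hn0' : (0 : ℝ) < n := Nat.cast_pos.2 hn0
  have hdist : dist (X 0 (p + (n : ℝ)⁻¹ • v)) (X 0 p) = (n : ℝ)⁻¹ * ‖v‖ := by
    simp [hX0, dist_eq_norm, norm_smul]
  have := hK _ (hX _) (hdist ▸ hn) s hs
  rw [hdist, dist_eq_norm] at this
  rw [norm_smul, Real.norm_of_nonneg hn0'.le]
  calc (n : ℝ) * ‖g (X s (p + (n : ℝ)⁻¹ • v)) - g (X s p)‖
      ≤ n * (K * ((n : ℝ)⁻¹ * ‖v‖)) := by gcongr
    _ = K * ‖v‖ := by field_simp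

theorem fderiv_flow_apply_eq_add_integral (hg : ContDiff ℝ 1 g) (hX0 : ∀ q, X 0 q = q)
    (hX : ∀ q t, HasDerivAt (fun s => X s q) (g (X t q)) t) {p : E} {T : ℝ}
    (hXd : ∀ t ∈ Icc 0 T, DifferentiableAt ℝ (X t) p) (v : E) :
    IntegrableOn (fun s => fderiv ℝ g (X s p) (fderiv ℝ (X s) p v)) (Icc 0 T) ∧
      ∀ t ∈ Icc 0 T,
        fderiv ℝ (X t) p v = v + ∫ s in 0..t, fderiv ℝ g (X s p) (fderiv ℝ (X s) p v) := by
  set w := fun s => fderiv ℝ g (X s p) (fderiv ℝ (X s) p v)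
  set q : ℕ → E := fun n => p + (n : ℝ)⁻¹ • v
  set G : ℕ → ℝ → E := fun n s => (n : ℝ) • (g (X s (q n)) - g (X s p))
  have hgc : Continuous g := hg.continuous
  have hXc : ∀ q, Continuous (X · q) := fun q =>
    continuous_iff_continuousAt.2 fun t => (hX q t).continuousAt
  have hc : Tendsto (fun n : ℕ => ‖(n : ℝ)‖) atTop atTop := by
    simpa using tendsto_natCast_atTop_atTop
  have hGw : ∀ s ∈ Icc 0 T, Tendsto (G · s) atTop (𝓝 (w s)) := fun s hs =>
    (((hg.differentiable one_ne_zero) (X s p)).hasFDerivAt.comp p (hXd s hs).hasFDerivAt).lim v hc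
  have hGc : ∀ n, Continuous (G n) := fun n => by fun_prop
  obtain ⟨K, hK⟩ := exists_eventually_norm_smul_comp_flow_sub_le hg.locallyLipschitz hX0 hX p v T
  have hwK : ∀ s ∈ Icc 0 T, ‖w s‖ ≤ K := fun s hs =>
    le_of_tendsto (hGw s hs).norm (hK.mono fun n hn => hn s hs)
  have hwint : IntegrableOn w (Icc 0 T) :=
    ⟨aestronglyMeasurable_of_tendsto_ae atTop (fun n => (hGc n).aestronglyMeasurable)
        ((ae_restrict_iff' measurableSet_Icc).2 (.of_forall hGw)),
      HasFiniteIntegral.restrict_of_bounded K measure_Icc_lt_top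
        ((ae_restrict_iff' measurableSet_Icc).2 (.of_forall hwK))⟩
  refine ⟨hwint, fun t ht => ?_⟩
  have hsub : uIoc 0 t ⊆ Icc 0 T := by
    rw [uIoc_of_le ht.1]; exact Ioc_subset_Icc_self.trans (Icc_subset_Icc_right ht.2)
  have hint : Tendsto (fun n => ∫ s in 0..t, G n s) atTop (𝓝 (∫ s in 0..t, w s)) :=
    intervalIntegral.tendsto_integral_filter_of_dominated_convergence (fun _ => K)
      (.of_forall fun n => (hGc n).aestronglyMeasurable)
      (hK.mono fun n hn => .of_forall fun s hs => hn s (hsub hs)) intervalIntegrable_const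
      (.of_forall fun s hs => hGw s (hsub hs))
  have hgXint : ∀ q, IntervalIntegrable (fun s => g (X s q)) volume 0 t := fun q =>
    (hgc.comp (hXc q)).intervalIntegrable 0 t
  have hflow : ∀ q, X t q - q = ∫ s in 0..t, g (X s q) := fun q => by
    rw [intervalIntegral.integral_eq_sub_of_hasDerivAt (fun s _ => hX q s) (hgXint q), hX0]
  have hquot : ∀ᶠ n : ℕ in atTop, (n : ℝ) • (X t (q n) - X t p) = v + ∫ s in 0..t, G n s := by
    filter_upwards [eventually_gt_atTop 0] with n hn
    have hn' : (n : ℝ) ≠ 0 := Nat.cast_ne_zero.2 hn.ne'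
    rw [intervalIntegral.integral_smul, intervalIntegral.integral_sub (hgXint _) (hgXint _),
      ← hflow, ← hflow]
    simp only [q]
    rw [smul_sub, smul_sub, smul_sub, smul_sub, smul_add, smul_inv_smul₀ hn']
    abel
  exact tendsto_nhds_unique ((hXd t ht).hasFDerivAt.lim v hc)
    ((tendsto_const_nhds.add hint).congr' (hquot.mono fun n hn => hn.symm))

theorem hasDerivWithinAt_fderiv_flow_apply (hg : ContDiff ℝ 1 g) (hX0 : ∀ q, X 0 q = q)
    (hX : ∀ q t, HasDerivAt (fun s => X s q) (g (X t q)) t) {p : E} {T : ℝ}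
    (hXd : ∀ t ∈ Icc 0 T, DifferentiableAt ℝ (X t) p) (v : E) :
    ∀ t ∈ Icc 0 T, HasDerivWithinAt (fun t => fderiv ℝ (X t) p v)
      (fderiv ℝ g (X t p) (fderiv ℝ (X t) p v)) (Icc 0 T) t := by
  intro t ht
  obtain ⟨hwint, hu⟩ := fderiv_flow_apply_eq_add_integral hg hX0 hX hXd v
  set w := fun s => fderiv ℝ g (X s p) (fderiv ℝ (X s) p v)
  have hprim : ContinuousOn (fun t => ∫ s in 0..t, w s) (Icc 0 T) := by
    simpa [uIcc_of_le (ht.1.trans ht.2)] using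
      intervalIntegral.continuousOn_primitive_interval (a := 0) (b := T)
        (by rwa [uIcc_of_le (ht.1.trans ht.2)])
  have hXc : Continuous (X · p) := continuous_iff_continuousAt.2 fun t => (hX p t).continuousAt
  have hwc : ContinuousOn w (Icc 0 T) :=
    ((hg.continuous_fderiv one_ne_zero).comp hXc).continuousOn.clm_apply
      ((continuousOn_const.add hprim).congr hu)
  have : Fact (t ∈ Icc 0 T) := ⟨ht⟩
  have hwint' : IntervalIntegrable w volume 0 t :=
    (hwint.mono_set (by rw [uIcc_of_le ht.1]; exact Icc_subset_Icc_right ht.2)).intervalIntegrable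
  exact ((intervalIntegral.integral_hasDerivWithinAt_right hwint'
    (hwc.stronglyMeasurableAtFilter_nhdsWithin measurableSet_Icc t) (hwc t ht)).const_add v).congr
    hu (hu t ht)

end Trajectories

theorem hasDerivWithinAt_dotProduct_of_adjoint {n : Type*} [Fintype n]
    {A : ℝ → Matrix n n ℝ} {lam u : ℝ → n → ℝ} {s : Set ℝ} {t : ℝ}
    (hlam : HasDerivWithinAt lam (-((A t)ᵀ *ᵥ lam t)) s t)
    (hu : HasDerivWithinAt u (A t *ᵥ u t) s t) :
    HasDerivWithinAt (fun t => lam t ⬝ᵥ u t) 0 s t := by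
  have hderiv : HasDerivWithinAt (fun t => lam t ⬝ᵥ u t)
      (-((A t)ᵀ *ᵥ lam t) ⬝ᵥ u t + lam t ⬝ᵥ (A t *ᵥ u t)) s t := by
    simpa only [dotProduct, Finset.sum_add_distrib] using HasDerivWithinAt.fun_sum fun i _ =>
      (hasDerivWithinAt_pi.1 hlam i).fun_mul (hasDerivWithinAt_pi.1 hu i)
  rwa [neg_dotProduct, mulVec_transpose, dotProduct_mulVec, neg_add_cancel] at hderiv

theorem eq_of_hasDerivWithinAt_Icc_zero {E : Type*} [NormedAddCommGroup E] [NormedSpace ℝ E]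
    {f : ℝ → E} {a b : ℝ} (hab : a ≤ b) (hf : ∀ x ∈ Icc a b, HasDerivWithinAt f 0 (Icc a b) x) :
    f b = f a :=
  constant_of_has_deriv_right_zero (fun x hx => (hf x hx).continuousWithinAt)
    (fun x hx => (hf x (Ico_subset_Icc_self hx)).mono_of_mem_nhdsWithin
      (Icc_mem_nhdsGE_of_mem hx))
    b ⟨hab, le_rfl⟩

/-- If `x(t;θ)` solves `dx/dt = f(x)`, `x(0;θ) = θ`, and `λ` solves the adjoint
system `dλ/dt = -(∇f(x(t;θ)))ᵀ λ` backwards from `λ(T) = ∇_x C(x(T;θ))`, then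
`λ(0) = ∇_θ C(x(T;θ))`, the gradient of `θ ↦ C(x(T;θ))`. -/
theorem adjoint_gives_gradient
    (d : ℕ) (T : ℝ) (hT : 0 ≤ T)
    (f : (Fin d → ℝ) → (Fin d → ℝ)) (hf : ContDiff ℝ 1 f)
    (C : (Fin d → ℝ) → ℝ) (hC : ContDiff ℝ 1 C)
    (X : ℝ → (Fin d → ℝ) → (Fin d → ℝ))
    (hX0 : ∀ θ' : Fin d → ℝ, X 0 θ' = θ')
    (hXode : ∀ (θ' : Fin d → ℝ) (t : ℝ),
      HasDerivAt (fun s => X s θ') (f (X t θ')) t)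
    (hXdiff : ∀ t : ℝ, Differentiable ℝ (fun θ' => X t θ'))
    (θ : Fin d → ℝ)
    (J : ℝ → Matrix (Fin d) (Fin d) ℝ)
    (hJ : ∀ t : ℝ, ∀ v : Fin d → ℝ, fderiv ℝ f (X t θ) v = (J t).mulVec v)
    (lam : ℝ → (Fin d → ℝ))
    (hlamode : ∀ t : ℝ, HasDerivAt lam (-((J t)ᵀ.mulVec (lam t))) t)
    (gC : Fin d → ℝ)
    (hgC : ∀ v : Fin d → ℝ, fderiv ℝ C (X T θ) v = gC ⬝ᵥ v)
    (hlamT : lam T = gC) :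
    ∀ v : Fin d → ℝ, fderiv ℝ (fun θ' => C (X T θ')) θ v = lam 0 ⬝ᵥ v := by
  intro v
  set u := fun t => fderiv ℝ (X t) θ v
  have hu : ∀ t ∈ Icc 0 T, HasDerivWithinAt u (J t *ᵥ u t) (Icc 0 T) t := fun t ht => by
    simpa only [hJ] using
      hasDerivWithinAt_fderiv_flow_apply hf hX0 hXode (fun t _ => hXdiff t θ) v t ht
  have hpairing : lam T ⬝ᵥ u T = lam 0 ⬝ᵥ u 0 := eq_of_hasDerivWithinAt_Icc_zero hT fun t ht =>
    hasDerivWithinAt_dotProduct_of_adjoint (hlamode t).hasDerivWithinAt (hu t ht)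
  have hu0 : u 0 = v := by
    simp only [u, show X 0 = id from funext hX0, fderiv_id, ContinuousLinearMap.id_apply]
  calc fderiv ℝ (fun θ' => C (X T θ')) θ v = fderiv ℝ C (X T θ) (u T) :=
        by rw [fderiv_fun_comp θ (hC.differentiable one_ne_zero _) (hXdiff T θ)]; rfl
    _ = lam 0 ⬝ᵥ v := by rw [hgC, ← hlamT, hpairing, hu0]
end

section
/- Let x solve dx/dt = f(x) with x(0) = θ, δ solve the variational system with δ(0) = γ, λ solve the adjoint system backwards with λ(T) = ∇_x C(x(T;θ)), and ξ solve the second-order adjoint system dξ/dt = -(∇_x f(x))^T ξ - (∇_x(∇_x f(x) δ))^T λ backwards with ξ(T) = (H_x C(x(T;θ))) δ(T). Then ξ(0) = (H_θ C(x(T;θ))) γ, the Hessian of θ ↦ C(x(T;θ)) applied to γ. -/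
open Matrix

/-! For a direction `u`, let `δᵤ = D θ u` and `ηᵤ = η u` be the first and second variations of the
flow. The pairing `ξ ⬝ᵥ δᵤ + λ ⬝ᵥ ηᵤ` is constant in time, because the first- and second-order
adjoint equations are the transposes of the variational ones. At `t = 0` it is `ξ(0) ⬝ᵥ u`; at
`t = T` the second-order chain rule for `θ ↦ C (x(T; θ))` identifies it with `u ⬝ᵥ H_θ γ`. -/

theorem HasDerivAt.dotProduct {𝕜 ι : Type*} [NontriviallyNormedField 𝕜] [Fintype ι]
    {a b : 𝕜 → ι → 𝕜} {a' b' : ι → 𝕜} {t : 𝕜}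
    (ha : HasDerivAt a a' t) (hb : HasDerivAt b b' t) :
    HasDerivAt (fun s => a s ⬝ᵥ b s) (a' ⬝ᵥ b t + a t ⬝ᵥ b') t := by
  have hcoord : ∀ i, HasDerivAt (fun s => a s i * b s i) (a' i * b t i + a t i * b' i) t :=
    fun i => (hasDerivAt_pi.mp ha i).mul (hasDerivAt_pi.mp hb i)
  exact (HasDerivAt.fun_sum (u := Finset.univ) fun i _ => hcoord i).congr_deriv
    (Finset.sum_add_distrib)

theorem second_order_adjoint_pairing_eq {ι : Type*} [Fintype ι] {A B : ℝ → Matrix ι ι ℝ}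
    {δ η lam ξ : ℝ → ι → ℝ}
    (hδ : ∀ t, HasDerivAt δ (A t *ᵥ δ t) t)
    (hη : ∀ t, HasDerivAt η (B t *ᵥ δ t + A t *ᵥ η t) t)
    (hlam : ∀ t, HasDerivAt lam (-((A t)ᵀ *ᵥ lam t)) t)
    (hξ : ∀ t, HasDerivAt ξ (-((A t)ᵀ *ᵥ ξ t) - (B t)ᵀ *ᵥ lam t) t) (a b : ℝ) :
    ξ a ⬝ᵥ δ a + lam a ⬝ᵥ η a = ξ b ⬝ᵥ δ b + lam b ⬝ᵥ η b := by
  have hzero : ∀ t, HasDerivAt (fun s => ξ s ⬝ᵥ δ s + lam s ⬝ᵥ η s) 0 t := by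
    intro t
    refine (((hξ t).dotProduct (hδ t)).add ((hlam t).dotProduct (hη t))).congr_deriv ?_
    simp only [mulVec_transpose, sub_dotProduct, neg_dotProduct, dotProduct_add,
      dotProduct_mulVec]
    ring
  exact is_const_of_deriv_eq_zero (fun t => (hzero t).differentiableAt)
    (fun t => (hzero t).deriv) a b

theorem fderiv_fderiv_comp_apply {𝕜 E F G : Type*} [NontriviallyNormedField 𝕜]
    [NormedAddCommGroup E] [NormedSpace 𝕜 E] [NormedAddCommGroup F] [NormedSpace 𝕜 F]
    [NormedAddCommGroup G] [NormedSpace 𝕜 G] {g : E → F} {C : F → G} {θ : E}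
    (hC : Differentiable 𝕜 C) (hC' : DifferentiableAt 𝕜 (fderiv 𝕜 C) (g θ))
    (hg : Differentiable 𝕜 g) (hg' : DifferentiableAt 𝕜 (fderiv 𝕜 g) θ) (v w : E) :
    fderiv 𝕜 (fun q => fderiv 𝕜 (fun p => C (g p)) q w) θ v =
      fderiv 𝕜 (fun y => fderiv 𝕜 C y (fderiv 𝕜 g θ w)) (g θ) (fderiv 𝕜 g θ v) +
        fderiv 𝕜 C (g θ) (fderiv 𝕜 (fun q => fderiv 𝕜 g q w) θ v) := by
  have hchain : (fun q => fderiv 𝕜 (fun p => C (g p)) q w) =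
      fun q => fderiv 𝕜 C (g q) (fderiv 𝕜 g q w) := by
    funext q
    rw [fderiv_fun_comp q (hC (g q)) (hg q), ContinuousLinearMap.comp_apply]
  have hCg : DifferentiableAt 𝕜 (fun q => fderiv 𝕜 C (g q)) θ := hC'.comp θ (hg θ)
  have hgw : DifferentiableAt 𝕜 (fun q => fderiv 𝕜 g q w) θ :=
    hg'.clm_apply (differentiableAt_const w)
  rw [hchain, fderiv_clm_apply hCg hgw, fderiv_clm_apply hC' (differentiableAt_const _),
    fderiv_fun_comp θ hC' (hg θ)]
  simp [add_comm]

theorem second_order_adjoint_gives_hessian_vector_general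
    (d : ℕ) (T : ℝ)
    (C : (Fin d → ℝ) → ℝ) (hC : ContDiff ℝ 2 C)
    -- the flow of dx/dt = f(x)
    (X : ℝ → (Fin d → ℝ) → (Fin d → ℝ))
    (hXsmooth : ∀ t : ℝ, ContDiff ℝ 2 (fun θ' => X t θ'))
    (θ γ : Fin d → ℝ)
    -- Jacobian of f and Jacobian of x ↦ (∇f(x)) δ
    (Jf : (Fin d → ℝ) → Matrix (Fin d) (Fin d) ℝ)
    (K : (Fin d → ℝ) → (Fin d → ℝ) → Matrix (Fin d) (Fin d) ℝ)
    -- the family of solutions of the variational system and the fact that it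
    -- is the derivative of the flow with respect to the initial condition
    (D : (Fin d → ℝ) → (Fin d → ℝ) → ℝ → (Fin d → ℝ))
    (hD0 : ∀ θ' γ' : Fin d → ℝ, D θ' γ' 0 = γ')
    (hDode : ∀ (θ' γ' : Fin d → ℝ) (t : ℝ),
      HasDerivAt (D θ' γ') ((Jf (X t θ')).mulVec (D θ' γ' t)) t)
    (hvar : ∀ (θ' γ' : Fin d → ℝ) (t : ℝ),
      fderiv ℝ (fun p => X t p) θ' γ' = D θ' γ' t)
    -- the second variation of the flow (the θ-derivative of δ)
    (η : (Fin d → ℝ) → ℝ → (Fin d → ℝ))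
    (hη0 : ∀ u : Fin d → ℝ, η u 0 = 0)
    (hηode : ∀ (u : Fin d → ℝ) (t : ℝ),
      HasDerivAt (η u)
        ((K (X t θ) (D θ γ t)).mulVec (D θ u t)
          + (Jf (X t θ)).mulVec (η u t)) t)
    (h2var : ∀ (u : Fin d → ℝ) (t : ℝ),
      fderiv ℝ (fun p => D p γ t) θ u = η u t)
    -- the gradient and Hessian of C at x(T;θ)
    (gC : Fin d → ℝ)
    (hgC : ∀ v : Fin d → ℝ, fderiv ℝ C (X T θ) v = gC ⬝ᵥ v)
    (HCx : Matrix (Fin d) (Fin d) ℝ)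
    (hHCx : ∀ v w : Fin d → ℝ,
      fderiv ℝ (fun q => fderiv ℝ C q w) (X T θ) v = v ⬝ᵥ HCx.mulVec w)
    -- the adjoint solution λ with final condition λ(T) = ∇C(x(T;θ))
    (lam : ℝ → (Fin d → ℝ))
    (hlamode : ∀ t : ℝ,
      HasDerivAt lam (-((Jf (X t θ))ᵀ.mulVec (lam t))) t)
    (hlamT : lam T = gC)
    -- the second-order adjoint solution ξ with ξ(T) = (H_x C(x(T;θ))) δ(T)
    (ξ : ℝ → (Fin d → ℝ))
    (hξode : ∀ t : ℝ,
      HasDerivAt ξ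
        (-((Jf (X t θ))ᵀ.mulVec (ξ t))
          - (K (X t θ) (D θ γ t))ᵀ.mulVec (lam t)) t)
    (hξT : ξ T = HCx.mulVec (D θ γ T))
    -- the Hessian of the composed map θ' ↦ C(x(T;θ'))
    (Hθ : Matrix (Fin d) (Fin d) ℝ)
    (hHθ : ∀ v w : Fin d → ℝ,
      fderiv ℝ (fun q => fderiv ℝ (fun p => C (X T p)) q w) θ v
        = v ⬝ᵥ Hθ.mulVec w) :
    ξ 0 = Hθ.mulVec γ := by
  have hHθ_apply : ∀ u, u ⬝ᵥ Hθ *ᵥ γ = D θ u T ⬝ᵥ HCx *ᵥ D θ γ T + gC ⬝ᵥ η u T := by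
    intro u
    rw [← hHθ, fderiv_fderiv_comp_apply (hC.differentiable two_ne_zero)
      ((hC.fderiv_right one_add_one_eq_two.le).differentiable one_ne_zero _)
      ((hXsmooth T).differentiable two_ne_zero)
      (((hXsmooth T).fderiv_right one_add_one_eq_two.le).differentiable one_ne_zero _)]
    simp only [hvar, hHCx, h2var, hgC]
  refine dotProduct_eq _ _ fun u => ?_
  have hpair := second_order_adjoint_pairing_eq (hDode θ u) (hηode u) hlamode hξode 0 T
  rw [hD0, hη0, dotProduct_zero, add_zero, hξT, hlamT] at hpair
  rw [hpair, dotProduct_comm (HCx *ᵥ _), dotProduct_comm _ u, hHθ_apply]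

/-- Second-order adjoint proposition: if `x` solves `dx/dt = f(x)`, `x(0)=θ`,
`δ` solves the variational system with `δ(0)=γ`, `λ` solves the adjoint system
backwards with `λ(T) = ∇C(x(T;θ))`, and `ξ` solves the second-order adjoint
system backwards with `ξ(T) = (H_x C(x(T;θ))) δ(T)`, then
`ξ(0) = (H_θ C(x(T;θ))) γ`. -/
theorem second_order_adjoint_gives_hessian_vector
    (d : ℕ) (T : ℝ) (hT : 0 ≤ T)
    (f : (Fin d → ℝ) → (Fin d → ℝ)) (hf : ContDiff ℝ 2 f)
    (C : (Fin d → ℝ) → ℝ) (hC : ContDiff ℝ 2 C)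
    -- the flow of dx/dt = f(x)
    (X : ℝ → (Fin d → ℝ) → (Fin d → ℝ))
    (hX0 : ∀ θ' : Fin d → ℝ, X 0 θ' = θ')
    (hXode : ∀ (θ' : Fin d → ℝ) (t : ℝ),
      HasDerivAt (fun s => X s θ') (f (X t θ')) t)
    (hXsmooth : ∀ t : ℝ, ContDiff ℝ 2 (fun θ' => X t θ'))
    (θ γ : Fin d → ℝ)
    -- Jacobian of f and Jacobian of x ↦ (∇f(x)) δ
    (Jf : (Fin d → ℝ) → Matrix (Fin d) (Fin d) ℝ)
    (hJf : ∀ (p v : Fin d → ℝ), fderiv ℝ f p v = (Jf p).mulVec v)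
    (K : (Fin d → ℝ) → (Fin d → ℝ) → Matrix (Fin d) (Fin d) ℝ)
    (hK : ∀ (p δv v : Fin d → ℝ),
      fderiv ℝ (fun q => (Jf q).mulVec δv) p v = (K p δv).mulVec v)
    -- the family of solutions of the variational system and the fact that it
    -- is the derivative of the flow with respect to the initial condition
    (D : (Fin d → ℝ) → (Fin d → ℝ) → ℝ → (Fin d → ℝ))
    (hD0 : ∀ θ' γ' : Fin d → ℝ, D θ' γ' 0 = γ')
    (hDode : ∀ (θ' γ' : Fin d → ℝ) (t : ℝ),
      HasDerivAt (D θ' γ') ((Jf (X t θ')).mulVec (D θ' γ' t)) t)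
    (hvar : ∀ (θ' γ' : Fin d → ℝ) (t : ℝ),
      fderiv ℝ (fun p => X t p) θ' γ' = D θ' γ' t)
    -- the second variation of the flow (the θ-derivative of δ)
    (η : (Fin d → ℝ) → ℝ → (Fin d → ℝ))
    (hη0 : ∀ u : Fin d → ℝ, η u 0 = 0)
    (hηode : ∀ (u : Fin d → ℝ) (t : ℝ),
      HasDerivAt (η u)
        ((K (X t θ) (D θ γ t)).mulVec (D θ u t)
          + (Jf (X t θ)).mulVec (η u t)) t)
    (h2var : ∀ (u : Fin d → ℝ) (t : ℝ),
      fderiv ℝ (fun p => D p γ t) θ u = η u t)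
    -- the gradient and Hessian of C at x(T;θ)
    (gC : Fin d → ℝ)
    (hgC : ∀ v : Fin d → ℝ, fderiv ℝ C (X T θ) v = gC ⬝ᵥ v)
    (HCx : Matrix (Fin d) (Fin d) ℝ)
    (hHCx : ∀ v w : Fin d → ℝ,
      fderiv ℝ (fun q => fderiv ℝ C q w) (X T θ) v = v ⬝ᵥ HCx.mulVec w)
    -- the adjoint solution λ with final condition λ(T) = ∇C(x(T;θ))
    (lam : ℝ → (Fin d → ℝ))
    (hlamode : ∀ t : ℝ,
      HasDerivAt lam (-((Jf (X t θ))ᵀ.mulVec (lam t))) t)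
    (hlamT : lam T = gC)
    -- the second-order adjoint solution ξ with ξ(T) = (H_x C(x(T;θ))) δ(T)
    (ξ : ℝ → (Fin d → ℝ))
    (hξode : ∀ t : ℝ,
      HasDerivAt ξ
        (-((Jf (X t θ))ᵀ.mulVec (ξ t))
          - (K (X t θ) (D θ γ t))ᵀ.mulVec (lam t)) t)
    (hξT : ξ T = HCx.mulVec (D θ γ T))
    -- the Hessian of the composed map θ' ↦ C(x(T;θ'))
    (Hθ : Matrix (Fin d) (Fin d) ℝ)
    (hHθ : ∀ v w : Fin d → ℝ,
      fderiv ℝ (fun q => fderiv ℝ (fun p => C (X T p)) q w) θ v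
        = v ⬝ᵥ Hθ.mulVec w) :
    ξ 0 = Hθ.mulVec γ :=
  second_order_adjoint_gives_hessian_vector_general d T C hC X hXsmooth θ γ Jf K D hD0 hDode hvar η
    hη0 hηode h2var gC hgC HCx hHCx lam hlamode hlamT ξ hξode hξT Hθ hHθ
end

section
/- Consider a single step of an s-stage Runge–Kutta method with coefficients (a_{ij}, b_i) applied to the variational system dδ/dt = M(t) δ along a known trajectory, and a single step of an s-stage Runge–Kutta method with coefficients (A_{ij}, B_i) applied to the adjoint system dλ/dt = -M(t)^T λ using the same internal-stage matrices M_i = ∇_x f(X_i). If B_i = b_i for all i and b_i A_{ij} + B_j a_{ji} = b_i B_j for all i, j, then the numerical solutions satisfy λ_{n+1}^T δ_{n+1} = λ_n^T δ_n; i.e., the quadratic invariant λ^T δ is exactly conserved by the partitioned Runge–Kutta method. -/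
open Matrix

/-- One step of a partitioned Runge–Kutta method applied to the variational
system `δ' = M(t) δ` and the adjoint system `λ' = -M(t)ᵀ λ` with the same
internal stage matrices `M_i` exactly conserves the pairing `λᵀ δ`, provided
`B_i = b_i` and `b_i A_{ij} + B_j a_{ji} = b_i B_j`. -/
theorem partitioned_RK_conserves_pairing
    (d s : ℕ) (h : ℝ)
    (a A : Fin s → Fin s → ℝ) (b B : Fin s → ℝ)
    (hb : ∀ i, b i ≠ 0)
    (hB : ∀ i, B i = b i)
    (hcond : ∀ i j, b i * A i j + B j * a j i = b i * B j)
    (M : Fin s → Matrix (Fin d) (Fin d) ℝ)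
    (dn dn1 ln ln1 : Fin d → ℝ)
    (Δ L : Fin s → (Fin d → ℝ))
    (hΔ : ∀ i, Δ i = dn + h • ∑ j, a i j • (M j).mulVec (Δ j))
    (hd1 : dn1 = dn + h • ∑ i, b i • (M i).mulVec (Δ i))
    (hL : ∀ i, L i = ln + h • ∑ j, A i j • (-((M j)ᵀ.mulVec (L j))))
    (hl1 : ln1 = ln + h • ∑ i, B i • (-((M i)ᵀ.mulVec (L i)))) :
    ln1 ⬝ᵥ dn1 = ln ⬝ᵥ dn := by
  classical
  set v : Fin s → (Fin d → ℝ) := fun i => (M i).mulVec (Δ i) with hv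
  set w : Fin s → (Fin d → ℝ) := fun i => -((M i)ᵀ.mulVec (L i)) with hw
  -- key pairing identity : λ-stage paired with M δ-stage cancels
  have key : ∀ i, L i ⬝ᵥ v i + w i ⬝ᵥ Δ i = 0 := by
    intro i
    simp [hv, hw, neg_dotProduct, Matrix.mulVec_transpose,
      Matrix.dotProduct_mulVec]
  have hln : ∀ i, ln = L i - h • ∑ j, A i j • w j := by
    intro i; rw [hL i]; abel
  have hdn : ∀ i, dn = Δ i - h • ∑ j, a i j • v j := by
    intro i; rw [hΔ i]; abel
  have dpsum : ∀ (f : Fin s → Fin d → ℝ) (u : Fin d → ℝ),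
      (∑ i, f i) ⬝ᵥ u = ∑ i, f i ⬝ᵥ u := by
    intro f u
    simp only [dotProduct, Finset.sum_apply, Finset.sum_mul]
    rw [Finset.sum_comm]
  have sumdp : ∀ (f : Fin s → Fin d → ℝ) (u : Fin d → ℝ),
      u ⬝ᵥ (∑ i, f i) = ∑ i, u ⬝ᵥ f i := by
    intro f u
    simp only [dotProduct, Finset.sum_apply, Finset.mul_sum]
    rw [Finset.sum_comm]
  have hlnv : ∀ i, ln ⬝ᵥ v i = L i ⬝ᵥ v i - h * ∑ j, A i j * (w j ⬝ᵥ v i) := by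
    intro i
    rw [hln i, sub_dotProduct, smul_dotProduct, dpsum]
    simp [smul_dotProduct, smul_eq_mul, Finset.mul_sum]
  have hwdn : ∀ i, w i ⬝ᵥ dn = w i ⬝ᵥ Δ i - h * ∑ j, a i j * (w i ⬝ᵥ v j) := by
    intro i
    rw [hdn i, dotProduct_sub, dotProduct_smul, sumdp]
    simp [dotProduct_smul, smul_eq_mul, Finset.mul_sum]
  have hv' : ∀ i, (M i).mulVec (Δ i) = v i := fun _ => rfl
  have hw' : ∀ i, -((M i)ᵀ.mulVec (L i)) = w i := fun _ => rfl
  have expand : ln1 ⬝ᵥ dn1 = ln ⬝ᵥ dn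
      + h * (∑ i, b i * (ln ⬝ᵥ v i))
      + h * (∑ i, b i * (w i ⬝ᵥ dn))
      + h * (h * ∑ i, ∑ j, b j * (b i * (w j ⬝ᵥ v i))) := by
    subst hd1 hl1
    simp only [hv', hw', hB, add_dotProduct, dotProduct_add,
      smul_dotProduct, dotProduct_smul, dpsum, sumdp,
      smul_eq_mul, Finset.mul_sum, mul_add, Finset.sum_add_distrib]
    ring_nf
    congr 1
    exact Finset.sum_congr rfl fun i _ => Finset.sum_congr rfl fun j _ => by ring
  -- termwise identity for the order-h sums
  have term : ∀ i, b i * (ln ⬝ᵥ v i) + b i * (w i ⬝ᵥ dn)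
      = - (h * ∑ j, (b i * (A i j * (w j ⬝ᵥ v i)) + b i * (a i j * (w i ⬝ᵥ v j)))) := by
    intro i
    rw [hlnv i, hwdn i]
    rw [Finset.sum_add_distrib, ← Finset.mul_sum, ← Finset.mul_sum]
    linear_combination (b i) * key i
  -- swap indices in one of the double sums
  have swap2 : (∑ i, ∑ j, b i * (a i j * (w i ⬝ᵥ v j)))
      = ∑ i, ∑ j, b j * (a j i * (w j ⬝ᵥ v i)) := by rw [Finset.sum_comm]
  have swapc : (∑ i, ∑ j, b i * (b j * (w i ⬝ᵥ v j)))
      = ∑ i, ∑ j, b j * (b i * (w j ⬝ᵥ v i)) := by rw [Finset.sum_comm]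
  have hS : (∑ i, b i * (ln ⬝ᵥ v i)) + (∑ i, b i * (w i ⬝ᵥ dn))
      = - (h * ∑ i, ∑ j, b i * (b j * (w i ⬝ᵥ v j))) := by
    rw [← Finset.sum_add_distrib]
    calc (∑ i, (b i * (ln ⬝ᵥ v i) + b i * (w i ⬝ᵥ dn)))
        = ∑ i, - (h * ∑ j, (b i * (A i j * (w j ⬝ᵥ v i)) + b i * (a i j * (w i ⬝ᵥ v j)))) :=
          Finset.sum_congr rfl (fun i _ => term i)
      _ = - (h * ∑ i, ∑ j, (b i * (A i j * (w j ⬝ᵥ v i)) + b i * (a i j * (w i ⬝ᵥ v j)))) := by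
          rw [Finset.mul_sum, ← Finset.sum_neg_distrib]
      _ = - (h * ((∑ i, ∑ j, b i * (A i j * (w j ⬝ᵥ v i)))
              + ∑ i, ∑ j, b i * (a i j * (w i ⬝ᵥ v j)))) := by
          congr 1
          rw [← Finset.sum_add_distrib]
          congr 1
          exact Finset.sum_congr rfl (fun i _ => by rw [Finset.sum_add_distrib])
      _ = - (h * ∑ i, ∑ j, b i * (b j * (w i ⬝ᵥ v j))) := by
          rw [swap2, ← Finset.sum_add_distrib, swapc]
          congr 1
          congr 1
          refine Finset.sum_congr rfl (fun i _ => ?_)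
          rw [← Finset.sum_add_distrib]
          refine Finset.sum_congr rfl (fun j _ => ?_)
          have hc := hcond i j
          rw [hB j] at hc
          linear_combination (w j ⬝ᵥ v i) * hc
  rw [expand]
  linear_combination h * hS - h * h * swapc
end

section
/- Let g(x, δ) = (f(x), (∇_x f(x)) δ) be the augmented vector field and let C̃(x, δ) = ∇_x C(x)^T δ. Applying the exact-gradient adjoint theorem (conservation of the pairing for the symplectic partitioned Runge–Kutta pair) to the augmented system with final conditions ξ_N = (H_x C(x_N(θ))) δ_N and λ_N = ∇_x C(x_N(θ)) yields simultaneously ξ_0 = (H_θ C(x_N(θ))) γ and λ_0 = ∇_θ C(x_N(θ)), where δ_0 = γ. -/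
open Matrix

/-!
The numerical adjoint of a Runge–Kutta method run with the coefficients
`A i j = b j - b j / b i * a j i` forms, together with the method itself, a symplectic partitioned
pair. Such a pair exactly conserves the pairing `⟨z_n, y_n⟩` between a solution `y` of a linear
variational system and a solution `z` of its adjoint system. Apply this to the first variation
`δ` (paired with `λ`) and to the linearisation `(δ(v), ε(v))` of the augmented system `(x, δ)`
(paired with `(ξ, λ)`), where `ε(v)` is the derivative of `δ(γ)` in direction `v`. This gives
`⟨λ_N, δ_N(v)⟩ = ⟨λ_0, v⟩` and `⟨ξ_N, δ_N(v)⟩ + ⟨λ_N, ε_N(v)⟩ = ⟨ξ_0, v⟩`. By the chain rule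
the left-hand sides are the first and second derivatives of `θ ↦ C(x_N(θ))`.
-/

section RungeKutta

variable {R ι E F G : Type*} [CommRing R]

def IsSymplecticRKPair (a A : ι → ι → R) (b : ι → R) : Prop :=
  ∀ i j, b i * b j = b i * a i j + b j * A j i

theorem isSymplecticRKPair_of_eq {K : Type*} [Field K] {a A : ι → ι → K} {b : ι → K}
    (hb : ∀ i, b i ≠ 0) (hA : ∀ i j, A i j = b j - b j / b i * a j i) :
    IsSymplecticRKPair a A b := by
  intro i j
  rw [hA j i]
  field_simp [hb j]
  ring

variable [Fintype ι] [AddCommGroup E] [Module R E] [AddCommGroup F] [Module R F]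
  [AddCommGroup G] [Module R G]

/-- One step `y₀ ↦ y₁` of the Runge–Kutta method `(a, b)` with step size `h`, internal stages `Y`
and stage slopes `k`. -/
def IsRKStep (a : ι → ι → R) (b : ι → R) (h : R) (y₀ y₁ : E) (Y k : ι → E) : Prop :=
  (∀ i, Y i = y₀ + h • ∑ j, a i j • k j) ∧ y₁ = y₀ + h • ∑ i, b i • k i

variable {a A : ι → ι → R} {b : ι → R} {h : R}

theorem IsRKStep.prod {y₀ y₁ : E} {Y k : ι → E} {z₀ z₁ : F} {Z l : ι → F}
    (hy : IsRKStep a b h y₀ y₁ Y k) (hz : IsRKStep a b h z₀ z₁ Z l) :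
    IsRKStep a b h (y₀, z₀) (y₁, z₁) (fun i => (Y i, Z i)) (fun i => (k i, l i)) := by
  refine ⟨fun i => ?_, ?_⟩
  · ext
    · simpa [Prod.fst_sum] using hy.1 i
    · simpa [Prod.snd_sum] using hz.1 i
  · ext
    · simpa [Prod.fst_sum] using hy.2
    · simpa [Prod.snd_sum] using hz.2

theorem IsRKStep.pairing_eq (B : F →ₗ[R] E →ₗ[R] G) (hab : IsSymplecticRKPair a A b)
    {y₀ y₁ : E} {Y k : ι → E} {z₀ z₁ : F} {Z l : ι → F}
    (hy : IsRKStep a b h y₀ y₁ Y k) (hz : IsRKStep A b h z₀ z₁ Z l) :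
    B z₁ y₁ = B z₀ y₀ + h • ∑ i, b i • (B (l i) (Y i) + B (Z i) (k i)) := by
  obtain ⟨hY, rfl⟩ := hy
  obtain ⟨hZ, rfl⟩ := hz
  have hlk : B (∑ i, b i • l i) (∑ j, b j • k j)
      = ∑ i, ∑ j, (b i * a i j) • B (l i) (k j) + ∑ i, ∑ j, (b i * A i j) • B (l j) (k i) := by
    rw [Finset.sum_comm (f := fun i j => (b i * A i j) • B (l j) (k i)), ← Finset.sum_add_distrib]
    simp only [map_sum, map_smul, LinearMap.sum_apply, LinearMap.smul_apply, Finset.smul_sum,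
      smul_smul, ← Finset.sum_add_distrib, ← add_smul]
    rw [Finset.sum_comm]
    exact Finset.sum_congr rfl fun i _ => Finset.sum_congr rfl fun j _ => by rw [mul_comm, hab]
  have hlY : ∑ i, b i • B (l i) (Y i)
      = B (∑ i, b i • l i) y₀ + h • ∑ i, ∑ j, (b i * a i j) • B (l i) (k j) := by
    simp only [hY, map_add, map_smul, map_sum, LinearMap.sum_apply, LinearMap.smul_apply,
      smul_add, Finset.smul_sum, Finset.sum_add_distrib, smul_smul, mul_left_comm]
  have hZk : ∑ i, b i • B (Z i) (k i)
      = B z₀ (∑ i, b i • k i) + h • ∑ i, ∑ j, (b i * A i j) • B (l j) (k i) := by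
    simp only [hZ, map_add, map_smul, map_sum, LinearMap.add_apply, LinearMap.sum_apply,
      LinearMap.smul_apply, smul_add, Finset.smul_sum, Finset.sum_add_distrib, smul_smul,
      mul_left_comm]
  simp only [smul_add, Finset.sum_add_distrib, hlY, hZk, map_add, map_smul, LinearMap.add_apply,
    LinearMap.smul_apply, hlk]
  module

theorem pairing_eq_initial_of_isRKStep_adjoint (B : F →ₗ[R] E →ₗ[R] G)
    (hab : IsSymplecticRKPair a A b) {M : ℕ → ι → E → E} {M' : ℕ → ι → F → F}
    (hadj : ∀ n i z y, B (M' n i z) y = B z (M n i y))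
    {y : ℕ → E} {Y : ℕ → ι → E} {z : ℕ → F} {Z : ℕ → ι → F}
    (hy : ∀ n, IsRKStep a b h (y n) (y (n + 1)) (Y n) fun i => M n i (Y n i))
    (hz : ∀ n, IsRKStep A b h (z n) (z (n + 1)) (Z n) fun i => -M' n i (Z n i)) (n : ℕ) :
    B (z n) (y n) = B (z 0) (y 0) := by
  induction n with
  | zero => rfl
  | succ n ih => simp [(hy n).pairing_eq B hab (hz n), hadj, ih]

end RungeKutta

section Pairing

variable {R E₁ E₂ F₁ F₂ G : Type*} [CommSemiring R] [AddCommMonoid E₁] [Module R E₁]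
  [AddCommMonoid E₂] [Module R E₂] [AddCommMonoid F₁] [Module R F₁] [AddCommMonoid F₂]
  [Module R F₂] [AddCommMonoid G] [Module R G]

def LinearMap.prodPairing (B₁ : F₁ →ₗ[R] E₁ →ₗ[R] G) (B₂ : F₂ →ₗ[R] E₂ →ₗ[R] G) :
    F₁ × F₂ →ₗ[R] E₁ × E₂ →ₗ[R] G :=
  B₁.compl₁₂ (.fst R F₁ F₂) (.fst R E₁ E₂) + B₂.compl₁₂ (.snd R F₁ F₂) (.snd R E₁ E₂)

@[simp]
theorem LinearMap.prodPairing_apply (B₁ : F₁ →ₗ[R] E₁ →ₗ[R] G) (B₂ : F₂ →ₗ[R] E₂ →ₗ[R] G)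
    (z : F₁ × F₂) (y : E₁ × E₂) : prodPairing B₁ B₂ z y = B₁ z.1 y.1 + B₂ z.2 y.2 := rfl

end Pairing

section MatrixAdjoint

variable {R ι m : Type*} [CommRing R] [Fintype ι] [Fintype m] {a A : ι → ι → R} {b : ι → R}
  {h : R}

theorem dotProduct_eq_initial_of_isRKStep_transpose (hab : IsSymplecticRKPair a A b)
    {J : ℕ → ι → Matrix m m R} {y z : ℕ → m → R} {Y Z : ℕ → ι → m → R}
    (hy : ∀ n, IsRKStep a b h (y n) (y (n + 1)) (Y n) fun i => J n i *ᵥ Y n i)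
    (hz : ∀ n, IsRKStep A b h (z n) (z (n + 1)) (Z n) fun i => -((J n i)ᵀ *ᵥ Z n i)) (n : ℕ) :
    z n ⬝ᵥ y n = z 0 ⬝ᵥ y 0 :=
  pairing_eq_initial_of_isRKStep_adjoint (dotProductBilin R R) hab
    (fun _ _ _ _ => by simp [mulVec_transpose, dotProduct_mulVec]) hy hz n

/-- The linearisation `(δ, ε)` of the augmented system is block lower triangular,
`δ' = J δ`, `ε' = K δ + J ε`; `(ξ, μ)` solves its adjoint system. -/
theorem dotProduct_add_dotProduct_eq_initial_of_isRKStep_augmented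
    (hab : IsSymplecticRKPair a A b) {J K : ℕ → ι → Matrix m m R}
    {δ ε ξ μ : ℕ → m → R} {Δ Ε Ξ Μ : ℕ → ι → m → R}
    (hδ : ∀ n, IsRKStep a b h (δ n) (δ (n + 1)) (Δ n) fun i => J n i *ᵥ Δ n i)
    (hε : ∀ n, IsRKStep a b h (ε n) (ε (n + 1)) (Ε n) fun i =>
      K n i *ᵥ Δ n i + J n i *ᵥ Ε n i)
    (hξ : ∀ n, IsRKStep A b h (ξ n) (ξ (n + 1)) (Ξ n) fun i =>
      -((J n i)ᵀ *ᵥ Ξ n i + (K n i)ᵀ *ᵥ Μ n i))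
    (hμ : ∀ n, IsRKStep A b h (μ n) (μ (n + 1)) (Μ n) fun i => -((J n i)ᵀ *ᵥ Μ n i))
    (n : ℕ) :
    ξ n ⬝ᵥ δ n + μ n ⬝ᵥ ε n = ξ 0 ⬝ᵥ δ 0 + μ 0 ⬝ᵥ ε 0 :=
  pairing_eq_initial_of_isRKStep_adjoint
    ((dotProductBilin R R).prodPairing (dotProductBilin R R)) hab
    (M := fun n i p => (J n i *ᵥ p.1, K n i *ᵥ p.1 + J n i *ᵥ p.2))
    (M' := fun n i q => ((J n i)ᵀ *ᵥ q.1 + (K n i)ᵀ *ᵥ q.2, (J n i)ᵀ *ᵥ q.2))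
    (fun _ _ _ _ => by simp [mulVec_transpose, dotProduct_mulVec, dotProduct_add]; ring)
    (fun n => (hδ n).prod (hε n)) (fun n => (hξ n).prod (hμ n)) n

end MatrixAdjoint

section Calculus

variable {𝕜 ι E F G H : Type*} [NontriviallyNormedField 𝕜] [Fintype ι]
  [NormedAddCommGroup E] [NormedSpace 𝕜 E] [NormedAddCommGroup F] [NormedSpace 𝕜 F]
  [NormedAddCommGroup G] [NormedSpace 𝕜 G] [NormedAddCommGroup H] [NormedSpace 𝕜 H]

theorem fderiv_clm_apply_const_apply {c : E → F →L[𝕜] G} {x : E} (hc : DifferentiableAt 𝕜 c x)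
    (u : F) (v : E) : fderiv 𝕜 (fun y => c y u) x v = fderiv 𝕜 c x v u := by
  simp [fderiv_clm_apply hc (differentiableAt_const u)]

theorem fderiv_clm_comp_apply {c : F → G →L[𝕜] H} {p : E → F} {q : E → G} {x : E}
    (hc : DifferentiableAt 𝕜 c (p x)) (hp : DifferentiableAt 𝕜 p x)
    (hq : DifferentiableAt 𝕜 q x) (v : E) :
    fderiv 𝕜 (fun y => c (p y) (q y)) x v
      = fderiv 𝕜 c (p x) (fderiv 𝕜 p x v) (q x) + c (p x) (fderiv 𝕜 q x v) := by
  rw [fderiv_clm_apply (c := fun y => c (p y)) (hc.comp x hp) hq, fderiv_fun_comp x hc hp]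
  simp [add_comm]

theorem isRKStep_fderiv {a : ι → ι → 𝕜} {b : ι → 𝕜} {h : 𝕜} {y₀ y₁ : E → F} {Y k : ι → E → F}
    {x : E} (hstep : ∀ x', IsRKStep a b h (y₀ x') (y₁ x') (fun i => Y i x') (fun i => k i x'))
    (hy₀ : DifferentiableAt 𝕜 y₀ x) (hk : ∀ i, DifferentiableAt 𝕜 (k i) x) (v : E) :
    IsRKStep a b h (fderiv 𝕜 y₀ x v) (fderiv 𝕜 y₁ x v) (fun i => fderiv 𝕜 (Y i) x v)
      (fun i => fderiv 𝕜 (k i) x v) := by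
  have hcomb : ∀ c : ι → 𝕜, fderiv 𝕜 (fun x' => y₀ x' + h • ∑ j, c j • k j x') x v
      = fderiv 𝕜 y₀ x v + h • ∑ j, c j • fderiv 𝕜 (k j) x v := fun c => by
    rw [(hy₀.hasFDerivAt.fun_add ((HasFDerivAt.fun_sum fun j _ =>
      ((hk j).hasFDerivAt.fun_const_smul (c j))).fun_const_smul h)).fderiv]
    simp
  refine ⟨fun i => ?_, ?_⟩
  · have hY : Y i = fun x' => y₀ x' + h • ∑ j, a i j • k j x' := funext fun x' => (hstep x').1 i
    exact (congrArg (fderiv 𝕜 · x v) hY).trans (hcomb _)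
  · have hy₁ : y₁ = fun x' => y₀ x' + h • ∑ j, b j • k j x' := funext fun x' => (hstep x').2
    exact (congrArg (fderiv 𝕜 · x v) hy₁).trans (hcomb _)

variable {m : Type*} [Fintype m] {f : (m → 𝕜) → m → 𝕜} {Jf : (m → 𝕜) → Matrix m m 𝕜}
  {K : (m → 𝕜) → (m → 𝕜) → Matrix m m 𝕜}

theorem differentiableAt_jacobian_mulVec (hf : Differentiable 𝕜 (fderiv 𝕜 f))
    (hJf : ∀ p v, fderiv 𝕜 f p v = Jf p *ᵥ v) {p q : E → m → 𝕜} {x : E}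
    (hp : DifferentiableAt 𝕜 p x) (hq : DifferentiableAt 𝕜 q x) :
    DifferentiableAt 𝕜 (fun y => Jf (p y) *ᵥ q y) x := by
  simp only [← hJf]
  exact ((hf _).comp x hp).clm_apply hq

theorem fderiv_jacobian_mulVec (hf : Differentiable 𝕜 (fderiv 𝕜 f))
    (hJf : ∀ p v, fderiv 𝕜 f p v = Jf p *ᵥ v)
    (hK : ∀ p δ v, fderiv 𝕜 (fun q => Jf q *ᵥ δ) p v = K p δ *ᵥ v) {p q : E → m → 𝕜} {x : E}
    (hp : DifferentiableAt 𝕜 p x) (hq : DifferentiableAt 𝕜 q x) (v : E) :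
    fderiv 𝕜 (fun y => Jf (p y) *ᵥ q y) x v
      = K (p x) (q x) *ᵥ fderiv 𝕜 p x v + Jf (p x) *ᵥ fderiv 𝕜 q x v := by
  have hK' : ∀ p δ u, fderiv 𝕜 (fderiv 𝕜 f) p u δ = K p δ *ᵥ u := fun p δ u => by
    rw [← hK, ← fderiv_clm_apply_const_apply (hf p)]
    simp only [hJf]
  simp only [← hJf]
  rw [fderiv_clm_comp_apply (hf _) hp hq, hK']

end Calculus

theorem exact_hessian_vector_multiplication_general
    (d s N : ℕ) (h : ℝ)
    (a : Fin s → Fin s → ℝ) (b : Fin s → ℝ) (hb : ∀ i, b i ≠ 0)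
    (A : Fin s → Fin s → ℝ)
    (hA : ∀ i j, A i j = b j - (b j / b i) * a j i)
    (f : (Fin d → ℝ) → (Fin d → ℝ)) (hf : ContDiff ℝ 2 f)
    (C : (Fin d → ℝ) → ℝ) (hC : ContDiff ℝ 2 C)
    (Jf : (Fin d → ℝ) → Matrix (Fin d) (Fin d) ℝ)
    (hJf : ∀ (p v : Fin d → ℝ), fderiv ℝ f p v = (Jf p).mulVec v)
    (K : (Fin d → ℝ) → (Fin d → ℝ) → Matrix (Fin d) (Fin d) ℝ)
    (hK : ∀ (p δv v : Fin d → ℝ),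
      fderiv ℝ (fun q => (Jf q).mulVec δv) p v = (K p δv).mulVec v)
    (θ γ : Fin d → ℝ)
    -- the numerical solution x_n(θ') of the original system with its stages
    (X : (Fin d → ℝ) → ℕ → (Fin d → ℝ))
    (XS : (Fin d → ℝ) → ℕ → Fin s → (Fin d → ℝ))
    -- the numerical solution δ_n(θ',γ') of the variational system
    (Dl : (Fin d → ℝ) → (Fin d → ℝ) → ℕ → (Fin d → ℝ))
    (DS : (Fin d → ℝ) → (Fin d → ℝ) → ℕ → Fin s → (Fin d → ℝ))
    (hD0 : ∀ θ' γ' : Fin d → ℝ, Dl θ' γ' 0 = γ')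
    (hDS : ∀ (θ' γ' : Fin d → ℝ) (n : ℕ) (i : Fin s),
      DS θ' γ' n i = Dl θ' γ' n
        + h • ∑ j, a i j • (Jf (XS θ' n j)).mulVec (DS θ' γ' n j))
    (hDstep : ∀ (θ' γ' : Fin d → ℝ) (n : ℕ),
      Dl θ' γ' (n + 1) = Dl θ' γ' n
        + h • ∑ i, b i • (Jf (XS θ' n i)).mulVec (DS θ' γ' n i))
    -- regularity of the numerical flow and its stages in θ
    (hXsm : ∀ n : ℕ, ContDiff ℝ 2 (fun θ' => X θ' n))
    (hXSsm : ∀ (n : ℕ) (i : Fin s), ContDiff ℝ 2 (fun θ' => XS θ' n i))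
    (hDsm : ∀ n : ℕ, ContDiff ℝ 1 (fun θ' => Dl θ' γ n))
    (hDSsm : ∀ (n : ℕ) (i : Fin s), ContDiff ℝ 1 (fun θ' => DS θ' γ n i))
    -- δ is the derivative of the numerical flow with respect to θ
    (hvar : ∀ (θ' γ' : Fin d → ℝ) (n : ℕ),
      fderiv ℝ (fun p => X p n) θ' γ' = Dl θ' γ' n)
    (hvarS : ∀ (θ' γ' : Fin d → ℝ) (n : ℕ) (i : Fin s),
      fderiv ℝ (fun p => XS p n i) θ' γ' = DS θ' γ' n i)
    -- the adjoint numerical solutions λ_n, ξ_n with their stages,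
    -- computed by the Runge--Kutta method with coefficients (A_{ij}, B_i = b_i)
    (lam ξ : ℕ → (Fin d → ℝ))
    (LS ΞS : ℕ → Fin s → (Fin d → ℝ))
    (hLS : ∀ (n : ℕ) (i : Fin s),
      LS n i = lam n + h • ∑ j, A i j • (-((Jf (XS θ n j))ᵀ.mulVec (LS n j))))
    (hlamstep : ∀ n : ℕ,
      lam (n + 1) = lam n + h • ∑ i, b i • (-((Jf (XS θ n i))ᵀ.mulVec (LS n i))))
    (hΞS : ∀ (n : ℕ) (i : Fin s),
      ΞS n i = ξ n + h • ∑ j, A i j •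
        (-((Jf (XS θ n j))ᵀ.mulVec (ΞS n j)
            + (K (XS θ n j) (DS θ γ n j))ᵀ.mulVec (LS n j))))
    (hξstep : ∀ n : ℕ,
      ξ (n + 1) = ξ n + h • ∑ i, b i •
        (-((Jf (XS θ n i))ᵀ.mulVec (ΞS n i)
            + (K (XS θ n i) (DS θ γ n i))ᵀ.mulVec (LS n i))))
    -- final conditions: λ_N = ∇C(x_N(θ)), ξ_N = (H_x C(x_N(θ))) δ_N
    (gC : Fin d → ℝ)
    (hgC : ∀ v : Fin d → ℝ, fderiv ℝ C (X θ N) v = gC ⬝ᵥ v)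
    (HCx : Matrix (Fin d) (Fin d) ℝ)
    (hHCx : ∀ v w : Fin d → ℝ,
      fderiv ℝ (fun q => fderiv ℝ C q w) (X θ N) v = v ⬝ᵥ HCx.mulVec w)
    (hlamN : lam N = gC)
    (hξN : ξ N = HCx.mulVec (Dl θ γ N))
    -- the Hessian of the composed map θ' ↦ C(x_N(θ'))
    (Hθ : Matrix (Fin d) (Fin d) ℝ)
    (hHθ : ∀ v w : Fin d → ℝ,
      fderiv ℝ (fun q => fderiv ℝ (fun p => C (X p N)) q w) θ v
        = v ⬝ᵥ Hθ.mulVec w) :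
    ξ 0 = Hθ.mulVec γ ∧
      (∀ v : Fin d → ℝ, fderiv ℝ (fun θ' => C (X θ' N)) θ v = lam 0 ⬝ᵥ v) := by
  have hab : IsSymplecticRKPair a A b := isSymplecticRKPair_of_eq hb hA
  have hfd : Differentiable ℝ (fderiv ℝ f) := (hf.fderiv_right le_rfl).differentiable one_ne_zero
  have hCd : Differentiable ℝ (fderiv ℝ C) := (hC.fderiv_right le_rfl).differentiable one_ne_zero
  have hXd n := (hXsm n).differentiable two_ne_zero
  have hXSd n i := (hXSsm n i).differentiable two_ne_zero θ
  have hDd n := (hDsm n).differentiable one_ne_zero θ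
  have hDSd n i := (hDSsm n i).differentiable one_ne_zero θ
  have hε v n : IsRKStep a b h (fderiv ℝ (fun θ' => Dl θ' γ n) θ v)
      (fderiv ℝ (fun θ' => Dl θ' γ (n + 1)) θ v) (fun i => fderiv ℝ (fun θ' => DS θ' γ n i) θ v)
      (fun i => K (XS θ n i) (DS θ γ n i) *ᵥ DS θ v n i
        + Jf (XS θ n i) *ᵥ fderiv ℝ (fun θ' => DS θ' γ n i) θ v) := by
    simpa only [fderiv_jacobian_mulVec hfd hJf hK (hXSd n _) (hDSd n _), hvarS] using
      isRKStep_fderiv (fun θ' => ⟨hDS θ' γ n, hDstep θ' γ n⟩) (hDd n)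
        (fun i => differentiableAt_jacobian_mulVec hfd hJf (hXSd n i) (hDSd n i)) v
  have hgrad v : lam N ⬝ᵥ Dl θ v N = lam 0 ⬝ᵥ v := by
    simpa [hD0] using dotProduct_eq_initial_of_isRKStep_transpose hab
      (fun n => ⟨hDS θ v n, hDstep θ v n⟩) (fun n => ⟨hLS n, hlamstep n⟩) N
  have hhess v : ξ N ⬝ᵥ Dl θ v N + lam N ⬝ᵥ fderiv ℝ (fun θ' => Dl θ' γ N) θ v = ξ 0 ⬝ᵥ v := by
    have hε₀ : fderiv ℝ (fun θ' => Dl θ' γ 0) θ = 0 := by simp [hD0]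
    simpa [hD0, hε₀] using dotProduct_add_dotProduct_eq_initial_of_isRKStep_augmented hab
      (fun n => ⟨hDS θ v n, hDstep θ v n⟩) (hε v) (fun n => ⟨hΞS n, hξstep n⟩)
      (fun n => ⟨hLS n, hlamstep n⟩) N
  have hchain q w : fderiv ℝ (fun p => C (X p N)) q w = fderiv ℝ C (X q N) (Dl q w N) := by
    rw [fderiv_fun_comp q (hC.differentiable two_ne_zero _) (hXd N q),
      ContinuousLinearMap.comp_apply, hvar]
  refine ⟨dotProduct_eq _ _ fun v => ?_, fun v => by rw [hchain, hgC, ← hlamN, hgrad]⟩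
  calc ξ 0 ⬝ᵥ v = ξ N ⬝ᵥ Dl θ v N + lam N ⬝ᵥ fderiv ℝ (fun θ' => Dl θ' γ N) θ v := (hhess v).symm
    _ = fderiv ℝ (fderiv ℝ C) (X θ N) (Dl θ v N) (Dl θ γ N)
          + fderiv ℝ C (X θ N) (fderiv ℝ (fun θ' => Dl θ' γ N) θ v) := by
      rw [← fderiv_clm_apply_const_apply (hCd _), hHCx, hgC, hξN, hlamN, dotProduct_comm]
    _ = fderiv ℝ (fun q => fderiv ℝ (fun p => C (X p N)) q γ) θ v := by
      simp only [hchain]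
      rw [fderiv_clm_comp_apply (hCd _) (hXd N θ) (hDd N), hvar]
    _ = Hθ *ᵥ γ ⬝ᵥ v := by rw [hHθ, dotProduct_comm]

/-- Exact Hessian-vector multiplication (Theorem 2): applying the adjoint
Runge–Kutta method with coefficients `A_{ij} = b_j - (b_j/b_i) a_{ji}`,
`B_i = b_i` to the coupled adjoint of the augmented system
`g(x,δ) = (f(x), (∇f(x))δ)`, with final conditions
`ξ_N = (H_x C(x_N(θ))) δ_N` and `λ_N = ∇_x C(x_N(θ))`, yields simultaneously
`ξ_0 = (H_θ C(x_N(θ))) γ` and `λ_0 = ∇_θ C(x_N(θ))`, where `δ_0 = γ`. -/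
theorem exact_hessian_vector_multiplication
    (d s N : ℕ) (h : ℝ)
    (a : Fin s → Fin s → ℝ) (b : Fin s → ℝ) (hb : ∀ i, b i ≠ 0)
    (A : Fin s → Fin s → ℝ)
    (hA : ∀ i j, A i j = b j - (b j / b i) * a j i)
    (f : (Fin d → ℝ) → (Fin d → ℝ)) (hf : ContDiff ℝ 2 f)
    (C : (Fin d → ℝ) → ℝ) (hC : ContDiff ℝ 2 C)
    (Jf : (Fin d → ℝ) → Matrix (Fin d) (Fin d) ℝ)
    (hJf : ∀ (p v : Fin d → ℝ), fderiv ℝ f p v = (Jf p).mulVec v)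
    (K : (Fin d → ℝ) → (Fin d → ℝ) → Matrix (Fin d) (Fin d) ℝ)
    (hK : ∀ (p δv v : Fin d → ℝ),
      fderiv ℝ (fun q => (Jf q).mulVec δv) p v = (K p δv).mulVec v)
    (θ γ : Fin d → ℝ)
    -- the numerical solution x_n(θ') of the original system with its stages
    (X : (Fin d → ℝ) → ℕ → (Fin d → ℝ))
    (XS : (Fin d → ℝ) → ℕ → Fin s → (Fin d → ℝ))
    (hX0 : ∀ θ' : Fin d → ℝ, X θ' 0 = θ')
    (hXS : ∀ (θ' : Fin d → ℝ) (n : ℕ) (i : Fin s),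
      XS θ' n i = X θ' n + h • ∑ j, a i j • f (XS θ' n j))
    (hXstep : ∀ (θ' : Fin d → ℝ) (n : ℕ),
      X θ' (n + 1) = X θ' n + h • ∑ i, b i • f (XS θ' n i))
    -- the numerical solution δ_n(θ',γ') of the variational system
    (Dl : (Fin d → ℝ) → (Fin d → ℝ) → ℕ → (Fin d → ℝ))
    (DS : (Fin d → ℝ) → (Fin d → ℝ) → ℕ → Fin s → (Fin d → ℝ))
    (hD0 : ∀ θ' γ' : Fin d → ℝ, Dl θ' γ' 0 = γ')
    (hDS : ∀ (θ' γ' : Fin d → ℝ) (n : ℕ) (i : Fin s),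
      DS θ' γ' n i = Dl θ' γ' n
        + h • ∑ j, a i j • (Jf (XS θ' n j)).mulVec (DS θ' γ' n j))
    (hDstep : ∀ (θ' γ' : Fin d → ℝ) (n : ℕ),
      Dl θ' γ' (n + 1) = Dl θ' γ' n
        + h • ∑ i, b i • (Jf (XS θ' n i)).mulVec (DS θ' γ' n i))
    -- regularity of the numerical flow and its stages in θ
    (hXsm : ∀ n : ℕ, ContDiff ℝ 2 (fun θ' => X θ' n))
    (hXSsm : ∀ (n : ℕ) (i : Fin s), ContDiff ℝ 2 (fun θ' => XS θ' n i))
    (hDsm : ∀ n : ℕ, ContDiff ℝ 1 (fun θ' => Dl θ' γ n))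
    (hDSsm : ∀ (n : ℕ) (i : Fin s), ContDiff ℝ 1 (fun θ' => DS θ' γ n i))
    -- δ is the derivative of the numerical flow with respect to θ
    (hvar : ∀ (θ' γ' : Fin d → ℝ) (n : ℕ),
      fderiv ℝ (fun p => X p n) θ' γ' = Dl θ' γ' n)
    (hvarS : ∀ (θ' γ' : Fin d → ℝ) (n : ℕ) (i : Fin s),
      fderiv ℝ (fun p => XS p n i) θ' γ' = DS θ' γ' n i)
    -- the adjoint numerical solutions λ_n, ξ_n with their stages,
    -- computed by the Runge--Kutta method with coefficients (A_{ij}, B_i = b_i)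
    (lam ξ : ℕ → (Fin d → ℝ))
    (LS ΞS : ℕ → Fin s → (Fin d → ℝ))
    (hLS : ∀ (n : ℕ) (i : Fin s),
      LS n i = lam n + h • ∑ j, A i j • (-((Jf (XS θ n j))ᵀ.mulVec (LS n j))))
    (hlamstep : ∀ n : ℕ,
      lam (n + 1) = lam n + h • ∑ i, b i • (-((Jf (XS θ n i))ᵀ.mulVec (LS n i))))
    (hΞS : ∀ (n : ℕ) (i : Fin s),
      ΞS n i = ξ n + h • ∑ j, A i j •
        (-((Jf (XS θ n j))ᵀ.mulVec (ΞS n j)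
            + (K (XS θ n j) (DS θ γ n j))ᵀ.mulVec (LS n j))))
    (hξstep : ∀ n : ℕ,
      ξ (n + 1) = ξ n + h • ∑ i, b i •
        (-((Jf (XS θ n i))ᵀ.mulVec (ΞS n i)
            + (K (XS θ n i) (DS θ γ n i))ᵀ.mulVec (LS n i))))
    -- final conditions: λ_N = ∇C(x_N(θ)), ξ_N = (H_x C(x_N(θ))) δ_N
    (gC : Fin d → ℝ)
    (hgC : ∀ v : Fin d → ℝ, fderiv ℝ C (X θ N) v = gC ⬝ᵥ v)
    (HCx : Matrix (Fin d) (Fin d) ℝ)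
    (hHCx : ∀ v w : Fin d → ℝ,
      fderiv ℝ (fun q => fderiv ℝ C q w) (X θ N) v = v ⬝ᵥ HCx.mulVec w)
    (hlamN : lam N = gC)
    (hξN : ξ N = HCx.mulVec (Dl θ γ N))
    -- the Hessian of the composed map θ' ↦ C(x_N(θ'))
    (Hθ : Matrix (Fin d) (Fin d) ℝ)
    (hHθ : ∀ v w : Fin d → ℝ,
      fderiv ℝ (fun q => fderiv ℝ (fun p => C (X p N)) q w) θ v
        = v ⬝ᵥ Hθ.mulVec w) :
    ξ 0 = Hθ.mulVec γ ∧
      (∀ v : Fin d → ℝ, fderiv ℝ (fun θ' => C (X θ' N)) θ v = lam 0 ⬝ᵥ v) :=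
  exact_hessian_vector_multiplication_general d s N h a b hb A hA f hf C hC Jf hJf K hK θ γ X XS Dl
    DS hD0 hDS hDstep hXsm hXSsm hDsm hDSsm hvar hvarS lam ξ LS ΞS hLS hlamstep hΞS hξstep gC hgC
    HCx hHCx hlamN hξN Hθ hHθ
end
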